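/- arXiv:2410.21625 — 6 statements merged into one kernel-verified Lean document; each statement's English description precedes it below -/
import Mathlib

section
/- Let 1 ≤ k ≤ n and A ∈ ℂ^{n×n}. Define Ĉ = {(λ, λa, λb) ∈ ℝ³ : a + ib ∈ Λ_k(A), λ ≥ 0} when Λ_k(A) is nonempty, and Ĉ = {(0,0,0)} when Λ_k(A) is empty. Then Ĉ = {(c,a,b) ∈ ℝ³ : c ≥ 0 and a·cos θ + b·sin θ ≤ c·λ_k(θ) for all θ ∈ ℝ}. -/
/-! The inequalities defining `Ĉ` are homogeneous, so a point `(c, a, b)` with `c > 0` lies in `Ĉ`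
exactly when `(a + ib)/c ∈ Λ_k(A)`. On the slice `c = 0` they read `a cos θ + b sin θ ≤ 0` for
all `θ`, which forces `a = b = 0`; the slice contributes only the apex `0`, which lies in `Ĉ`
in both cases of the definition. -/

open Matrix

noncomputable section

/-- The Hermitian real part `(A + Aᴴ)/2` of a complex matrix. -/
def ReM {n : ℕ} (A : Matrix (Fin n) (Fin n) ℂ) : Matrix (Fin n) (Fin n) ℂ :=
  (2⁻¹ : ℂ) • (A + Aᴴ)

/-- The Hermitian imaginary part `(A - Aᴴ)/(2i)` of a complex matrix. -/
def ImM {n : ℕ} (A : Matrix (Fin n) (Fin n) ℂ) : Matrix (Fin n) (Fin n) ℂ :=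
  ((2 * Complex.I)⁻¹ : ℂ) • (A - Aᴴ)

/-- The `k`-th largest eigenvalue (for `1 ≤ k ≤ n`) of a Hermitian `n × n` matrix
(with junk value `0` for non-Hermitian input): the eigenvalues sorted in increasing
order, evaluated at index `n - k`. -/
def kthEig {n : ℕ} (M : Matrix (Fin n) (Fin n) ℂ) (k : ℕ) : ℝ :=
  if hM : M.IsHermitian then
    if h : n - k < n then (hM.eigenvalues ∘ Tuple.sort hM.eigenvalues) ⟨n - k, h⟩ else 0
  else 0

/-- `λ_k(x,y) = λ_k(x·Re A + y·Im A)`. -/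
def lamXY {n : ℕ} (A : Matrix (Fin n) (Fin n) ℂ) (k : ℕ) (x y : ℝ) : ℝ :=
  kthEig ((x : ℂ) • ReM A + (y : ℂ) • ImM A) k

/-- `λ_k(θ) = λ_k(cos θ · Re A + sin θ · Im A)`. -/
def lamTheta {n : ℕ} (A : Matrix (Fin n) (Fin n) ℂ) (k : ℕ) (θ : ℝ) : ℝ :=
  lamXY A k (Real.cos θ) (Real.sin θ)

/-- The rank-`k` numerical range, via the Li–Sze halfplane description:
`Λ_k(A) = {a + ib : a cos θ + b sin θ ≤ λ_k(θ) for all θ}`. -/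
def NumRange {n : ℕ} (A : Matrix (Fin n) (Fin n) ℂ) (k : ℕ) : Set ℂ :=
  {z : ℂ | ∀ θ : ℝ, z.re * Real.cos θ + z.im * Real.sin θ ≤ lamTheta A k θ}

/-- The curve `O_k(A) = {(λ_k(θ), -cos θ, -sin θ)} ⊂ ℝ³`. -/
def OkSet {n : ℕ} (A : Matrix (Fin n) (Fin n) ℂ) (k : ℕ) : Set (Fin 3 → ℝ) :=
  {v | ∃ θ : ℝ, v = ![lamTheta A k θ, -Real.cos θ, -Real.sin θ]}

/-- Conical hull: all finite nonnegative combinations of elements of `S`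
(including the empty combination `0`). -/
def coneHull {V : Type*} [AddCommMonoid V] [Module ℝ V] (S : Set V) : Set V :=
  {x | ∃ (m : ℕ) (c : Fin m → ℝ) (p : Fin m → V),
    (∀ i, 0 ≤ c i) ∧ (∀ i, p i ∈ S) ∧ x = ∑ i, c i • p i}

/-- Dual cone with respect to the standard inner product on `ι → ℝ`. -/
def dualCone {ι : Type*} [Fintype ι] (C : Set (ι → ℝ)) : Set (ι → ℝ) :=
  {w | ∀ v ∈ C, 0 ≤ ∑ i, w i * v i}

/-- The cone `Ĉ = {(c,a,b) : c ≥ 0 and a cos θ + b sin θ ≤ c λ_k(θ) for all θ}`. -/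
def ChatSet {n : ℕ} (A : Matrix (Fin n) (Fin n) ℂ) (k : ℕ) : Set (Fin 3 → ℝ) :=
  {v | 0 ≤ v 0 ∧ ∀ θ : ℝ, v 1 * Real.cos θ + v 2 * Real.sin θ ≤ v 0 * lamTheta A k θ}

open Complex

lemma eq_zero_of_forall_mul_cos_add_mul_sin_nonpos {a b : ℝ}
    (h : ∀ θ : ℝ, a * Real.cos θ + b * Real.sin θ ≤ 0) : a = 0 ∧ b = 0 := by
  have h0 := h 0
  have hπ := h Real.pi
  have hπ2 := h (Real.pi / 2)
  have hπ2' := h (-(Real.pi / 2))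
  simp only [Real.cos_zero, Real.sin_zero, Real.cos_pi, Real.sin_pi, Real.cos_pi_div_two,
    Real.sin_pi_div_two, Real.cos_neg, Real.sin_neg] at h0 hπ hπ2 hπ2'
  constructor <;> linarith

section

variable {n k : ℕ} {A : Matrix (Fin n) (Fin n) ℂ}

lemma mem_NumRange_iff {a b : ℝ} :
    (a + b * I : ℂ) ∈ NumRange A k ↔
      ∀ θ : ℝ, a * Real.cos θ + b * Real.sin θ ≤ lamTheta A k θ := by
  simp [NumRange]

lemma zero_mem_ChatSet : ![0, 0, 0] ∈ ChatSet A k :=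
  ⟨le_rfl, fun θ => by simp⟩

lemma mem_ChatSet_of_mem_NumRange {a b lam : ℝ} (hz : (a + b * I : ℂ) ∈ NumRange A k)
    (hlam : 0 ≤ lam) : ![lam, lam * a, lam * b] ∈ ChatSet A k := by
  refine ⟨hlam, fun θ => ?_⟩
  have hθ := mul_le_mul_of_nonneg_left (mem_NumRange_iff.1 hz θ) hlam
  simp only [Matrix.cons_val_zero, Matrix.cons_val_one, Matrix.cons_val_two, Matrix.head_cons,
    Matrix.tail_cons]
  linarith

lemma eq_zero_of_mem_ChatSet {v : Fin 3 → ℝ} (hv : v ∈ ChatSet A k) (h0 : v 0 = 0) :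
    v = ![0, 0, 0] := by
  obtain ⟨h1, h2⟩ := eq_zero_of_forall_mul_cos_add_mul_sin_nonpos fun θ => by
    simpa [h0] using hv.2 θ
  ext i
  fin_cases i <;> simp [h0, h1, h2]

lemma mem_NumRange_of_mem_ChatSet {v : Fin 3 → ℝ} (hv : v ∈ ChatSet A k) (h0 : 0 < v 0) :
    ((v 1 / v 0 : ℝ) + (v 2 / v 0 : ℝ) * I : ℂ) ∈ NumRange A k := by
  refine mem_NumRange_iff.2 fun θ => ?_
  rw [div_mul_eq_mul_div, div_mul_eq_mul_div, ← add_div, div_le_iff₀ h0, mul_comm _ (v 0)]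
  exact hv.2 θ

end

lemma eq_vecCons_mul_div {v : Fin 3 → ℝ} (h0 : v 0 ≠ 0) :
    v = ![v 0, v 0 * (v 1 / v 0), v 0 * (v 2 / v 0)] := by
  ext i
  fin_cases i <;> field_simp <;> rfl

open scoped Classical in
theorem stmt1_general {n k : ℕ}
    (A : Matrix (Fin n) (Fin n) ℂ) :
    (if (NumRange A k).Nonempty then
      {v : Fin 3 → ℝ | ∃ a b lam : ℝ,
        (a + b * Complex.I) ∈ NumRange A k ∧ 0 ≤ lam ∧ v = ![lam, lam * a, lam * b]}
     else {![0, 0, 0]}) = ChatSet A k := by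
  ext v
  split_ifs with hne
  · refine ⟨fun ⟨a, b, lam, hz, hlam, hv⟩ => hv ▸ mem_ChatSet_of_mem_NumRange hz hlam,
      fun hv => ?_⟩
    rcases hv.1.eq_or_lt with h0 | h0
    · obtain ⟨z, hz⟩ := hne
      refine ⟨z.re, z.im, 0, by rwa [re_add_im], le_rfl, ?_⟩
      rw [eq_zero_of_mem_ChatSet hv h0.symm]
      simp
    · exact ⟨_, _, _, mem_NumRange_of_mem_ChatSet hv h0, h0.le, eq_vecCons_mul_div h0.ne'⟩
  · refine ⟨fun hv => hv ▸ zero_mem_ChatSet, fun hv => ?_⟩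
    rcases hv.1.eq_or_lt with h0 | h0
    · exact eq_zero_of_mem_ChatSet hv h0.symm
    · exact absurd ⟨_, mem_NumRange_of_mem_ChatSet hv h0⟩ hne

open scoped Classical in
/-- The lifted cone `Ĉ` over `Λ_k(A)` (with `Ĉ = {0}` when `Λ_k(A) = ∅`)
equals `{(c,a,b) : c ≥ 0 and a cos θ + b sin θ ≤ c λ_k(θ) for all θ}`. -/
theorem stmt1 {n k : ℕ} (hk1 : 1 ≤ k) (hkn : k ≤ n)
    (A : Matrix (Fin n) (Fin n) ℂ) :
    (if (NumRange A k).Nonempty then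
      {v : Fin 3 → ℝ | ∃ a b lam : ℝ,
        (a + b * Complex.I) ∈ NumRange A k ∧ 0 ≤ lam ∧ v = ![lam, lam * a, lam * b]}
     else {![0, 0, 0]}) = ChatSet A k :=
  stmt1_general A

end
end

section
/- Let 1 ≤ k ≤ n and A ∈ ℂ^{n×n}. Suppose O_k(A) is not contained in any plane through the origin, i.e., there is no (c,a,b) ∈ ℝ³ \ {0} with c·λ_k(θ) − a·cos θ − b·sin θ = 0 for all θ ∈ ℝ. Let Ĉ = {(c,a,b) ∈ ℝ³ : c ≥ 0 and a·cos θ + b·sin θ ≤ c·λ_k(θ) for all θ ∈ ℝ}. Then: (1) if k ≤ (n+1)/2, the dual cone of Ĉ equals closure(cone(O_k(A))); (2) if k ≥ (n+1)/2, then the dual cone of Ĉ is all of ℝ³, Ĉ = {(0,0,0)}, and Λ_k(A) = ∅. -/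
/-!
For a Hermitian `M`, `λ_k(-M) = -λ_{n+1-k}(M)`, and the matrix at angle `θ + π` is the negative of
the one at angle `θ`. Hence `λ_k(θ + π) = -λ_{n+1-k}(θ)`, so `λ_k(θ) + λ_k(θ + π)` is `≥ 0` when
`2k ≤ n + 1` and `≤ 0` when `2k ≥ n + 1`.

The cone `Ĉ` is the dual cone of `O_k(A) ∪ {e₀}` with `e₀ = (1,0,0)`, so by the bipolar theorem
`Ĉ*` is the closed conical hull of `O_k(A) ∪ {e₀}`. When `2k ≤ n + 1`, `e₀` already lies in the
closed conical hull of `O_k(A)`: either some `λ_k(θ) + λ_k(θ + π)` is positive, and `e₀` is a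
positive combination of the two antipodal points of `O_k(A)` at `θ` and `θ + π`, or all these sums
vanish, in which case `O_k(A)` is symmetric and, lying in no plane, spans `ℝ³`. When
`2k ≥ n + 1`, adding the inequalities defining `Ĉ` at `θ` and `θ + π` shows that every element of
`Ĉ` is orthogonal to `O_k(A)`, which spans `ℝ³`, hence is `0`; since `(1, Re z, Im z) ∈ Ĉ` for
every `z ∈ Λ_k(A)`, `Λ_k(A)` is empty.
-/

open Matrix

noncomputable section

open Polynomial in
lemma Matrix.IsHermitian.charpoly_neg {𝕜 ι : Type*} [RCLike 𝕜] [Fintype ι] [DecidableEq ι]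
    {M : Matrix ι ι 𝕜} (hM : M.IsHermitian) :
    (-M).charpoly = ∏ i, (X - C (-(hM.eigenvalues i : 𝕜))) := by
  conv_lhs => rw [hM.spectral_theorem, ← map_neg, Unitary.conjStarAlgAut_apply, charpoly_mul_comm,
    ← mul_assoc]
  rw [Unitary.coe_star_mul_self, one_mul, diagonal_neg, charpoly_diagonal]
  rfl

open Polynomial in
lemma Matrix.IsHermitian.map_eigenvalues_neg {𝕜 ι : Type*} [RCLike 𝕜] [Fintype ι]
    [DecidableEq ι] {M : Matrix ι ι 𝕜} (hM : M.IsHermitian) :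
    Finset.univ.val.map hM.neg.eigenvalues = Finset.univ.val.map (-hM.eigenvalues) := by
  have h := hM.neg.roots_charpoly_eq_eigenvalues
  rw [hM.charpoly_neg, roots_prod _ _ (Finset.prod_ne_zero_iff.mpr fun i _ => X_sub_C_ne_zero _)]
    at h
  simpa [Multiset.map_map, Function.comp_def] using (congrArg (Multiset.map RCLike.re) h).symm

lemma Finset.univ_val_map_comp_perm {α β : Type*} [Fintype α] (f : α → β) (σ : Equiv.Perm α) :
    Finset.univ.val.map (f ∘ σ) = Finset.univ.val.map f := by
  rw [← Multiset.map_map, Multiset.map_univ_val_equiv]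

lemma Monotone.eq_of_univ_val_map_eq {α : Type*} [LinearOrder α] {m : ℕ} {f g : Fin m → α}
    (hf : Monotone f) (hg : Monotone g) (h : Finset.univ.val.map f = Finset.univ.val.map g) :
    f = g := by
  rw [Fin.univ_val_map, Fin.univ_val_map] at h
  exact List.ofFn_injective
    ((Multiset.coe_eq_coe.mp h).eq_of_sortedLE hf.sortedLE_ofFn hg.sortedLE_ofFn)

lemma Tuple.comp_sort_eq_neg_comp_sort_rev {α : Type*} [AddCommGroup α] [LinearOrder α]
    [IsOrderedAddMonoid α] {m : ℕ} {f g : Fin m → α}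
    (h : Finset.univ.val.map g = Finset.univ.val.map (-f)) :
    g ∘ Tuple.sort g = fun i => -(f ∘ Tuple.sort f) i.rev := by
  refine (Tuple.monotone_sort g).eq_of_univ_val_map_eq
    (fun i j hij => neg_le_neg (Tuple.monotone_sort f (Fin.rev_le_rev.mpr hij))) ?_
  rw [Finset.univ_val_map_comp_perm, h]
  exact (Finset.univ_val_map_comp_perm (-f) (Fin.revPerm.trans (Tuple.sort f))).symm

section KthEigenvalue
variable {n k : ℕ}

lemma kthEig_neg (hk1 : 1 ≤ k) (hkn : k ≤ n) {M : Matrix (Fin n) (Fin n) ℂ}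
    (hM : M.IsHermitian) : kthEig (-M) k = -kthEig M (n + 1 - k) := by
  have hrev : Fin.rev ⟨n - k, by omega⟩ = (⟨n - (n + 1 - k), by omega⟩ : Fin n) := by
    ext; simp only [Fin.val_rev]; omega
  rw [kthEig, kthEig, dif_pos hM.neg, dif_pos hM, dif_pos (by omega), dif_pos (by omega),
    Tuple.comp_sort_eq_neg_comp_sort_rev hM.map_eigenvalues_neg]
  exact congrArg (fun i => -(hM.eigenvalues ∘ Tuple.sort hM.eigenvalues) i) hrev

lemma kthEig_le_kthEig {j : ℕ} (hk1 : 1 ≤ k) (hkj : k ≤ j) (hjn : j ≤ n)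
    {M : Matrix (Fin n) (Fin n) ℂ} (hM : M.IsHermitian) : kthEig M j ≤ kthEig M k := by
  simp only [kthEig, dif_pos hM, dif_pos (show n - j < n by omega),
    dif_pos (show n - k < n by omega)]
  exact Tuple.monotone_sort _ (Fin.mk_le_mk.mpr (by omega))

variable (A : Matrix (Fin n) (Fin n) ℂ)

lemma isHermitian_ReM : (ReM A).IsHermitian :=
  (isHermitian_add_transpose_self A).smul (by simp [IsSelfAdjoint])

lemma isHermitian_ImM : (ImM A).IsHermitian := by
  rw [IsHermitian, ImM, conjTranspose_smul, conjTranspose_sub, conjTranspose_conjTranspose,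
    ← neg_sub, smul_neg, ← neg_smul]
  congr 1
  simp

lemma isHermitian_smul_ReM_add_smul_ImM (x y : ℝ) :
    ((x : ℂ) • ReM A + (y : ℂ) • ImM A).IsHermitian :=
  ((isHermitian_ReM A).smul (by simp [IsSelfAdjoint])).add
    ((isHermitian_ImM A).smul (by simp [IsSelfAdjoint]))

lemma lamTheta_add_pi (hk1 : 1 ≤ k) (hkn : k ≤ n) (θ : ℝ) :
    lamTheta A k (θ + Real.pi) = -lamTheta A (n + 1 - k) θ := by
  rw [lamTheta, lamTheta, lamXY, lamXY, Real.cos_add_pi, Real.sin_add_pi,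
    ← kthEig_neg hk1 hkn (isHermitian_smul_ReM_add_smul_ImM A _ _)]
  push_cast
  rw [neg_smul, neg_smul, neg_add]

lemma lamTheta_le_lamTheta {j : ℕ} (hk1 : 1 ≤ k) (hkj : k ≤ j) (hjn : j ≤ n) (θ : ℝ) :
    lamTheta A j θ ≤ lamTheta A k θ :=
  kthEig_le_kthEig hk1 hkj hjn (isHermitian_smul_ReM_add_smul_ImM A _ _)

lemma zero_le_lamTheta_add_lamTheta_add_pi (hk1 : 1 ≤ k) (hkn : k ≤ n) (hk : 2 * k ≤ n + 1)
    (θ : ℝ) : 0 ≤ lamTheta A k θ + lamTheta A k (θ + Real.pi) := by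
  rw [lamTheta_add_pi A hk1 hkn]
  linarith [lamTheta_le_lamTheta A hk1 (by omega : k ≤ n + 1 - k) (by omega) θ]

lemma lamTheta_add_lamTheta_add_pi_nonpos (hk1 : 1 ≤ k) (hkn : k ≤ n) (hk : n + 1 ≤ 2 * k)
    (θ : ℝ) : lamTheta A k θ + lamTheta A k (θ + Real.pi) ≤ 0 := by
  rw [lamTheta_add_pi A hk1 hkn]
  linarith [lamTheta_le_lamTheta A (by omega : 1 ≤ n + 1 - k) (by omega : n + 1 - k ≤ k) hkn θ]

end KthEigenvalue

section ConeHull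
variable {V : Type*} [AddCommGroup V] [Module ℝ V]

lemma coneHull_eq_hull (S : Set V) : coneHull S = PointedCone.hull ℝ S := by
  ext x
  rw [SetLike.mem_coe, Submodule.mem_span_set']
  constructor
  · rintro ⟨m, c, p, hc, hp, rfl⟩
    exact ⟨m, fun i => ⟨c i, hc i⟩, fun i => ⟨p i, hp i⟩, rfl⟩
  · rintro ⟨m, c, p, rfl⟩
    exact ⟨m, fun i => c i, fun i => p i, fun i => (c i).2, fun i => (p i).2, rfl⟩

lemma closure_coneHull_insert [TopologicalSpace V] [ContinuousAdd V] [ContinuousConstSMul ℝ V]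
    {S : Set V} {x : V} (hx : x ∈ closure (coneHull S)) :
    closure (coneHull (insert x S)) = closure (coneHull S) := by
  rw [coneHull_eq_hull] at hx ⊢
  rw [coneHull_eq_hull]
  refine subset_antisymm (closure_minimal ?_ isClosed_closure)
    (closure_mono (Submodule.span_mono (Set.subset_insert x S)))
  exact Submodule.span_le.mpr (Set.insert_subset hx
    (PointedCone.subset_hull.trans (PointedCone.hull ℝ S).le_topologicalClosure))

end ConeHull

section SymmetricHull
variable {R V : Type*} [Ring R] [LinearOrder R] [IsOrderedRing R] [AddCommGroup V] [Module R V]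
  {S : Set V}

lemma PointedCone.neg_mem_hull_of_neg_mem (hS : ∀ x ∈ S, -x ∈ S) {x : V}
    (hx : x ∈ PointedCone.hull R S) : -x ∈ PointedCone.hull R S := by
  induction hx using Submodule.span_induction with
  | mem x h => exact PointedCone.subset_hull (hS x h)
  | zero => simp
  | add x y _ _ hx hy => rw [neg_add]; exact add_mem hx hy
  | smul c x _ hx => rw [← smul_neg]; exact Submodule.smul_mem _ c hx

lemma PointedCone.coe_hull_eq_span_of_neg_mem (hS : ∀ x ∈ S, -x ∈ S) :
    (PointedCone.hull R S : Set V) = Submodule.span R S := by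
  refine subset_antisymm (PointedCone.hull_le_span R S) fun x hx => ?_
  induction hx using Submodule.span_induction with
  | mem x h => exact PointedCone.subset_hull h
  | zero => exact zero_mem _
  | add x y _ _ hx hy => exact add_mem hx hy
  | smul a x _ hx =>
    rcases le_or_gt 0 a with ha | ha
    · exact Submodule.smul_mem _ ⟨a, ha⟩ hx
    · rw [← neg_smul_neg]
      exact Submodule.smul_mem _ ⟨-a, neg_nonneg.mpr ha.le⟩
        (PointedCone.neg_mem_hull_of_neg_mem hS hx)

end SymmetricHull

section DualCone
variable {ι : Type*} [Fintype ι]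

lemma LinearMap.apply_eq_dotProduct {R : Type*} [CommSemiring R] [DecidableEq ι]
    (f : (ι → R) →ₗ[R] R) (v : ι → R) : f v = (fun i => f (Pi.single i 1)) ⬝ᵥ v := by
  conv_lhs => rw [← Finset.univ_sum_single v]
  rw [map_sum]
  refine Finset.sum_congr rfl fun i _ => ?_
  rw [mul_comm, ← smul_eq_mul, ← map_smul, ← Pi.single_smul', smul_eq_mul, mul_one]

lemma isClosed_dualCone (C : Set (ι → ℝ)) : IsClosed (dualCone C) := by
  simp only [dualCone, Set.ofPred_forall]
  exact isClosed_biInter fun v _ => isClosed_le continuous_const (by fun_prop)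

lemma coneHull_subset_dualCone_dualCone (S : Set (ι → ℝ)) :
    coneHull S ⊆ dualCone (dualCone S) := by
  rintro _ ⟨m, c, p, hc, hp, rfl⟩ w hw
  change 0 ≤ (∑ j, c j • p j) ⬝ᵥ w
  rw [sum_dotProduct]
  exact Finset.sum_nonneg fun j _ => by
    rw [smul_dotProduct, dotProduct_comm]; exact mul_nonneg (hc j) (hw _ (hp j))

lemma dualCone_dualCone (S : Set (ι → ℝ)) : dualCone (dualCone S) = closure (coneHull S) := by
  classical
  refine subset_antisymm (fun x hx => ?_)
    (closure_minimal (coneHull_subset_dualCone_dualCone S) (isClosed_dualCone _))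
  by_contra hxS
  rw [coneHull_eq_hull] at hxS
  obtain ⟨f, hfS, hfx⟩ :=
    ProperCone.hyperplane_separation_point (Submodule.closure (PointedCone.hull ℝ S)) hxS
  have hf (v : ι → ℝ) : f v = (fun i => f (Pi.single i 1)) ⬝ᵥ v :=
    (f : (ι → ℝ) →ₗ[ℝ] ℝ).apply_eq_dotProduct v
  have hw : (fun i => f (Pi.single i 1)) ∈ dualCone S := fun v hv => by
    have := hfS v (subset_closure (PointedCone.subset_hull hv))
    rwa [hf] at this
  have hxw : 0 ≤ x ⬝ᵥ fun i => f (Pi.single i 1) := hx _ hw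
  rw [dotProduct_comm] at hxw
  exact hfx.not_ge (hf x ▸ hxw)

lemma span_eq_top_iff_forall_dotProduct_eq_zero {S : Set (ι → ℝ)} :
    Submodule.span ℝ S = ⊤ ↔ ∀ w : ι → ℝ, (∀ v ∈ S, w ⬝ᵥ v = 0) → w = 0 := by
  classical
  constructor
  · intro hS w hw
    have hspan : ∀ v ∈ Submodule.span ℝ S, w ⬝ᵥ v = 0 := fun v hv => by
      induction hv using Submodule.span_induction with
      | mem v h => exact hw v h
      | zero => exact dotProduct_zero w
      | add u v _ _ hu hv => rw [dotProduct_add, hu, hv, add_zero]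
      | smul c v _ hv => rw [dotProduct_smul, hv, smul_zero]
    exact dotProduct_self_eq_zero.mp (hspan w (hS ▸ Submodule.mem_top))
  · intro hS
    by_contra hne
    obtain ⟨f, hf0, hle⟩ := Submodule.exists_le_ker_of_lt_top _ (lt_top_iff_ne_top.mpr hne)
    have hw := hS (fun i => f (Pi.single i 1)) fun v hv => by
      rw [← f.apply_eq_dotProduct]
      exact hle (Submodule.subset_span hv)
    exact hf0 (LinearMap.ext fun v => by rw [f.apply_eq_dotProduct, hw, zero_dotProduct]; rfl)

end DualCone

def okPoint {n : ℕ} (A : Matrix (Fin n) (Fin n) ℂ) (k : ℕ) (θ : ℝ) : Fin 3 → ℝ :=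
  ![lamTheta A k θ, -Real.cos θ, -Real.sin θ]

section RankKNumericalRange
variable {n k : ℕ} (A : Matrix (Fin n) (Fin n) ℂ)

lemma okSet_eq_range : OkSet A k = Set.range (okPoint A k) := by
  ext v
  exact exists_congr fun θ => eq_comm

lemma okPoint_mem_okSet (θ : ℝ) : okPoint A k θ ∈ OkSet A k := ⟨θ, rfl⟩

lemma dotProduct_okPoint (w : Fin 3 → ℝ) (θ : ℝ) :
    w ⬝ᵥ okPoint A k θ = w 0 * lamTheta A k θ - w 1 * Real.cos θ - w 2 * Real.sin θ := by
  simp only [okPoint, dotProduct, Fin.sum_univ_three, cons_val_zero, cons_val_one,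
    cons_val_two, head_cons, tail_cons]
  ring

lemma okPoint_add_okPoint_add_pi (θ : ℝ) :
    okPoint A k θ + okPoint A k (θ + Real.pi)
      = (lamTheta A k θ + lamTheta A k (θ + Real.pi)) • ![1, 0, 0] := by
  ext i
  fin_cases i <;> simp [okPoint, Real.cos_add_pi, Real.sin_add_pi]

lemma chatSet_eq_dualCone : ChatSet A k = dualCone (insert ![1, 0, 0] (OkSet A k)) := by
  ext v
  simp only [ChatSet, dualCone, okSet_eq_range, Set.forall_mem_insert, Set.forall_mem_range,
    Set.mem_ofPred_eq]
  refine and_congr (by simp [Fin.sum_univ_three]) (forall_congr' fun θ => ?_)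
  change _ ↔ 0 ≤ v ⬝ᵥ okPoint A k θ
  rw [dotProduct_okPoint]
  constructor <;> intro <;> linarith

lemma span_okSet_eq_top (hplane : ¬ ∃ w : Fin 3 → ℝ, w ≠ 0 ∧
      ∀ θ : ℝ, w 0 * lamTheta A k θ - w 1 * Real.cos θ - w 2 * Real.sin θ = 0) :
    Submodule.span ℝ (OkSet A k) = ⊤ := by
  refine span_eq_top_iff_forall_dotProduct_eq_zero.mpr fun w hw => ?_
  by_contra hw0
  exact hplane ⟨w, hw0, fun θ => dotProduct_okPoint A w θ ▸ hw _ (okPoint_mem_okSet A θ)⟩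

lemma mem_closure_coneHull_okSet (hspan : Submodule.span ℝ (OkSet A k) = ⊤) (hk1 : 1 ≤ k)
    (hkn : k ≤ n) (hk : 2 * k ≤ n + 1) :
    ![1, 0, 0] ∈ closure (coneHull (OkSet A k)) := by
  refine subset_closure ?_
  rw [coneHull_eq_hull]
  by_cases hpos : ∃ θ, 0 < lamTheta A k θ + lamTheta A k (θ + Real.pi)
  · obtain ⟨θ, hθ⟩ := hpos
    rw [← inv_smul_smul₀ hθ.ne' ![(1 : ℝ), 0, 0], ← okPoint_add_okPoint_add_pi]
    exact Submodule.smul_mem _ ⟨_, inv_nonneg.mpr hθ.le⟩ (add_mem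
      (PointedCone.subset_hull (okPoint_mem_okSet A θ))
      (PointedCone.subset_hull (okPoint_mem_okSet A (θ + Real.pi))))
  · simp only [not_exists, not_lt] at hpos
    have hneg : ∀ v ∈ OkSet A k, -v ∈ OkSet A k := by
      rintro _ ⟨θ, rfl⟩
      have h := okPoint_add_okPoint_add_pi (k := k) A θ
      rw [le_antisymm (hpos θ) (zero_le_lamTheta_add_lamTheta_add_pi A hk1 hkn hk θ),
        zero_smul] at h
      exact ⟨θ + Real.pi, neg_eq_of_add_eq_zero_right h⟩
    rw [SetLike.mem_coe, ← SetLike.mem_coe, PointedCone.coe_hull_eq_span_of_neg_mem hneg,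
      hspan]
    trivial

lemma chatSet_eq_zero (hspan : Submodule.span ℝ (OkSet A k) = ⊤) (hk1 : 1 ≤ k) (hkn : k ≤ n)
    (hk : n + 1 ≤ 2 * k) : ChatSet A k = {0} := by
  refine Set.eq_singleton_iff_unique_mem.mpr ⟨⟨le_rfl, fun θ => by simp⟩, ?_⟩
  rintro v ⟨hv0, hv⟩
  refine span_eq_top_iff_forall_dotProduct_eq_zero.mp hspan v ?_
  rintro _ ⟨θ, rfl⟩
  change v ⬝ᵥ okPoint A k θ = 0
  have hθπ := hv (θ + Real.pi)
  rw [Real.cos_add_pi, Real.sin_add_pi] at hθπ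
  rw [dotProduct_okPoint]
  nlinarith [hv θ, mul_nonpos_of_nonneg_of_nonpos hv0
    (lamTheta_add_lamTheta_add_pi_nonpos A hk1 hkn hk θ)]

end RankKNumericalRange

/-- Suppose `O_k(A)` is not contained in a plane through the origin.
If `k ≤ (n+1)/2` then `Ĉ* = closure(cone(O_k(A)))`; if `k ≥ (n+1)/2` then
`Ĉ* = ℝ³`, `Ĉ = {0}`, and `Λ_k(A) = ∅`. -/
theorem stmt4 {n k : ℕ} (hk1 : 1 ≤ k) (hkn : k ≤ n)
    (A : Matrix (Fin n) (Fin n) ℂ)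
    (hplane : ¬ ∃ w : Fin 3 → ℝ, w ≠ 0 ∧
      ∀ θ : ℝ, w 0 * lamTheta A k θ - w 1 * Real.cos θ - w 2 * Real.sin θ = 0) :
    ((k : ℝ) ≤ (n + 1) / 2 →
        dualCone (ChatSet A k) = closure (coneHull (OkSet A k))) ∧
    ((n + 1 : ℝ) / 2 ≤ (k : ℝ) →
        dualCone (ChatSet A k) = Set.univ ∧
        ChatSet A k = {![0, 0, 0]} ∧
        NumRange A k = ∅) := by
  have hspan := span_okSet_eq_top A hplane
  refine ⟨fun hk => ?_, fun hk => ?_⟩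
  · have hk' : 2 * k ≤ n + 1 := by exact_mod_cast (by linarith : (2 * k : ℝ) ≤ n + 1)
    rw [chatSet_eq_dualCone, dualCone_dualCone,
      closure_coneHull_insert (mem_closure_coneHull_okSet A hspan hk1 hkn hk')]
  · have hk' : n + 1 ≤ 2 * k := by exact_mod_cast (by linarith : (n + 1 : ℝ) ≤ 2 * k)
    have hC := chatSet_eq_zero A hspan hk1 hkn hk'
    refine ⟨?_, hC.trans (congrArg _ (by ext i; fin_cases i <;> rfl)), ?_⟩
    · rw [hC]
      exact Set.eq_univ_of_forall fun w => by rintro v rfl; simp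
    · refine Set.eq_empty_of_forall_notMem fun z hz => ?_
      have h1 : ![1, z.re, z.im] ∈ ChatSet A k := ⟨zero_le_one, fun θ => by simpa using hz θ⟩
      rw [hC] at h1
      simpa using congrFun h1 0
end
end

section
/- Let 1 ≤ k ≤ n with k ≤ (n+1)/2, and let A ∈ ℂ^{n×n}. Suppose O_k(A) is not contained in any plane through the origin. If F is a face of conv(O_k(A)) with dim F = 1 and (0,0,0) lies in the relative interior of F, then there exists θ ∈ ℝ with λ_k(θ + π) = −λ_k(θ) such that F is the line segment joining the antipodal points p = (λ_k(θ), −cos θ, −sin θ) and −p of O_k(A). -/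
open Matrix

noncomputable section

/-!
A face `F` of `conv(O_k(A))` is the convex hull of the points of `O_k(A)` it contains. If `F`
is one-dimensional and contains the origin, these points lie on a line through the origin,
while every point of `O_k(A)` satisfies `x₁² + x₂² = 1`; so they are among `±p` for one
`p ∈ O_k(A)`, and both must occur since `F` is not a single point. Writing `p` and `-p` as
points of `O_k(A)` at angles `θ` and `φ` forces `(cos φ, sin φ) = (cos (θ + π), sin (θ + π))`,
hence `λ_k(θ + π) = λ_k(φ) = -λ_k(θ)`.
-/

theorem QuadraticMap.eq_or_eq_neg_of_finrank_eq_one {K E : Type*} [Field K] [AddCommGroup E]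
    [Module K E] (Q : QuadraticForm K E) {p : Submodule K E} (hp : Module.finrank K p = 1)
    {x y : E} (hx : x ∈ p) (hy : y ∈ p) (hQ : Q x = Q y) (hQy : Q y ≠ 0) : x = y ∨ x = -y := by
  have hy0 : (⟨y, hy⟩ : p) ≠ 0 := fun h => hQy <| by
    rw [show y = 0 from congrArg Subtype.val h, QuadraticMap.map_zero]
  obtain ⟨c, hc⟩ := (finrank_eq_one_iff_of_nonzero' _ hy0).1 hp ⟨x, hx⟩
  have hxc : x = c • y := congrArg Subtype.val hc.symm
  have hc1 : c * c = 1 := by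
    rw [hxc, QuadraticMap.map_smul, smul_eq_mul] at hQ
    exact mul_right_cancel₀ hQy (hQ.trans (one_mul _).symm)
  rcases mul_self_eq_one_iff.1 hc1 with rfl | rfl
  · exact Or.inl (by simpa using hxc)
  · exact Or.inr (by simpa using hxc)

section Face

variable {𝕜 E : Type*} [Field 𝕜] [LinearOrder 𝕜] [IsStrictOrderedRing 𝕜]
  [AddCommGroup E] [Module 𝕜 E]

theorem IsExtreme.subset_convexHull_inter {s F : Set E} (h : IsExtreme 𝕜 (convexHull 𝕜 s) F) :
    F ⊆ convexHull 𝕜 (s ∩ F) := by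
  -- `T` is convex and contains `s`, hence contains `convexHull 𝕜 s ⊇ F`.
  set T := convexHull 𝕜 (s ∩ F) ∪ (convexHull 𝕜 s \ F)
  have hTs : T ⊆ convexHull 𝕜 s :=
    Set.union_subset (convexHull_mono Set.inter_subset_left) Set.sdiff_subset
  have hT : Convex 𝕜 T := by
    refine convex_iff_segment_subset.2 fun p hp q hq z hz => ?_
    by_cases hzF : z ∈ F
    · refine Or.inl ?_
      rw [← insert_endpoints_openSegment, Set.mem_insert_iff, Set.mem_insert_iff] at hz
      rcases hz with rfl | rfl | hz
      · exact hp.resolve_right fun h' => h'.2 hzF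
      · exact hq.resolve_right fun h' => h'.2 hzF
      · have hpF := h.left_mem_of_mem_openSegment (hTs hp) (hTs hq) hzF hz
        have hqF := h.right_mem_of_mem_openSegment (hTs hp) (hTs hq) hzF hz
        exact (convex_convexHull 𝕜 _).segment_subset
          (hp.resolve_right fun h' => h'.2 hpF) (hq.resolve_right fun h' => h'.2 hqF)
          (openSegment_subset_segment 𝕜 p q hz)
    · exact Or.inr ⟨(convex_convexHull 𝕜 s).segment_subset (hTs hp) (hTs hq) hz, hzF⟩
  have hsT : s ⊆ T := fun x hx => by
    by_cases hxF : x ∈ F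
    · exact Or.inl (subset_convexHull 𝕜 _ ⟨hx, hxF⟩)
    · exact Or.inr ⟨subset_convexHull 𝕜 s hx, hxF⟩
  intro x hxF
  exact (convexHull_min hsT hT (h.subset hxF)).resolve_right fun h' => h'.2 hxF

theorem IsExtreme.eq_convexHull_inter {s F : Set E} (h : IsExtreme 𝕜 (convexHull 𝕜 s) F)
    (hF : Convex 𝕜 F) : F = convexHull 𝕜 (s ∩ F) :=
  h.subset_convexHull_inter.antisymm (convexHull_min Set.inter_subset_right hF)

theorem IsExtreme.eq_segment_neg_of_finrank_eq_one (Q : QuadraticForm 𝕜 E) {s F : Set E} (hs : ∀ x ∈ s, Q x = 1) (hF : Convex 𝕜 F)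
    (hface : IsExtreme 𝕜 (convexHull 𝕜 s) F)
    (hdim : Module.finrank 𝕜 (affineSpan 𝕜 F).direction = 1) (h0 : (0 : E) ∈ F) :
    ∃ x ∈ s, -x ∈ s ∧ F = segment 𝕜 x (-x) := by
  have hFeq := hface.eq_convexHull_inter hF
  have hFdir : F ⊆ (affineSpan 𝕜 F).direction := fun x hx => by
    simpa using AffineSubspace.vsub_mem_direction (mem_affineSpan 𝕜 hx) (mem_affineSpan 𝕜 h0)
  obtain ⟨x, hxs, hxF⟩ : (s ∩ F).Nonempty :=
    convexHull_nonempty_iff.1 (by rw [← hFeq]; exact ⟨0, h0⟩)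
  have hpm : s ∩ F ⊆ {x, -x} := fun y ⟨hys, hyF⟩ =>
    Q.eq_or_eq_neg_of_finrank_eq_one hdim (hFdir hyF) (hFdir hxF)
      (by rw [hs y hys, hs x hxs]) (by rw [hs x hxs]; exact one_ne_zero)
  have hneg : -x ∈ s ∩ F := by
    by_contra hnx
    have hFx : F ⊆ {x} := fun z hz => by
      rw [hFeq] at hz
      exact convexHull_min (fun y hy => (hpm hy).resolve_right fun e => hnx (e ▸ hy))
        (convex_singleton x) hz
    have hx0 : x = 0 := (hFx h0).symm
    simpa [hx0] using hs x hxs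
  have hFseg : F ⊆ segment 𝕜 x (-x) :=
    calc F = convexHull 𝕜 (s ∩ F) := hFeq
      _ ⊆ convexHull 𝕜 {x, -x} := convexHull_mono hpm
      _ = segment 𝕜 x (-x) := convexHull_pair x (-x)
  exact ⟨x, hxs, hneg.1, hFseg.antisymm (hF.segment_subset hxF hneg.2)⟩

end Face

def cylinderForm : QuadraticForm ℝ (Fin 3 → ℝ) :=
  QuadraticMap.proj 1 1 + QuadraticMap.proj 2 2

theorem cylinderForm_eq_one_of_mem_OkSet {n k : ℕ} {A : Matrix (Fin n) (Fin n) ℂ}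
    {x : Fin 3 → ℝ} (hx : x ∈ OkSet A k) : cylinderForm x = 1 := by
  obtain ⟨θ, rfl⟩ := hx
  simp [cylinderForm, QuadraticMap.proj_apply, ← sq]

theorem lamTheta_add_pi_of_neg_mem_OkSet {n k : ℕ} {A : Matrix (Fin n) (Fin n) ℂ} {θ : ℝ}
    (h : -![lamTheta A k θ, -Real.cos θ, -Real.sin θ] ∈ OkSet A k) :
    lamTheta A k (θ + Real.pi) = -lamTheta A k θ := by
  obtain ⟨φ, hφ⟩ := h
  have h0 : -lamTheta A k θ = lamTheta A k φ := by simpa using congrFun hφ 0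
  have h1 : Real.cos θ = -Real.cos φ := by simpa using congrFun hφ 1
  have h2 : Real.sin θ = -Real.sin φ := by simpa using congrFun hφ 2
  rw [h0, lamTheta, Real.cos_add_pi, Real.sin_add_pi, h1, h2, neg_neg, neg_neg, lamTheta]

theorem stmt9_general {n k : ℕ}
    (A : Matrix (Fin n) (Fin n) ℂ)
    (F : Set (Fin 3 → ℝ)) (hFconv : Convex ℝ F)
    (hface : IsExtreme ℝ (convexHull ℝ (OkSet A k)) F)
    (hdim : Module.finrank ℝ (affineSpan ℝ F).direction = 1)
    (h0 : (0 : Fin 3 → ℝ) ∈ intrinsicInterior ℝ F) :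
    ∃ θ : ℝ, lamTheta A k (θ + Real.pi) = -lamTheta A k θ ∧
      F = segment ℝ ![lamTheta A k θ, -Real.cos θ, -Real.sin θ]
            (-![lamTheta A k θ, -Real.cos θ, -Real.sin θ]) := by
  obtain ⟨_, ⟨θ, rfl⟩, hneg, hF⟩ :=
    hface.eq_segment_neg_of_finrank_eq_one cylinderForm
      (fun _ => cylinderForm_eq_one_of_mem_OkSet) hFconv hdim (intrinsicInterior_subset h0)
  exact ⟨θ, lamTheta_add_pi_of_neg_mem_OkSet hneg, hF⟩

/-- Suppose `k ≤ (n+1)/2` and `O_k(A)` is not contained in a plane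
through the origin. If `F` is a one-dimensional face of `conv(O_k(A))` containing
`(0,0,0)` in its relative interior, then `F` is the segment joining a pair of antipodal
points `±(λ_k(θ), -cos θ, -sin θ)` of `O_k(A)`, where `λ_k(θ+π) = -λ_k(θ)`. -/
theorem stmt9 {n k : ℕ} (hk1 : 1 ≤ k) (hkn : k ≤ n) (hk2 : (k : ℝ) ≤ (n + 1) / 2)
    (A : Matrix (Fin n) (Fin n) ℂ)
    (hplane : ¬ ∃ w : Fin 3 → ℝ, w ≠ 0 ∧
      ∀ θ : ℝ, w 0 * lamTheta A k θ - w 1 * Real.cos θ - w 2 * Real.sin θ = 0)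
    (F : Set (Fin 3 → ℝ)) (hFconv : Convex ℝ F)
    (hface : IsExtreme ℝ (convexHull ℝ (OkSet A k)) F)
    (hdim : Module.finrank ℝ (affineSpan ℝ F).direction = 1)
    (h0 : (0 : Fin 3 → ℝ) ∈ intrinsicInterior ℝ F) :
    ∃ θ : ℝ, lamTheta A k (θ + Real.pi) = -lamTheta A k θ ∧
      F = segment ℝ ![lamTheta A k θ, -Real.cos θ, -Real.sin θ]
            (-![lamTheta A k θ, -Real.cos θ, -Real.sin θ]) :=
  stmt9_general A F hFconv hface hdim h0

end
end

section
/- Let f ∈ ℝ[t,x,y] be homogeneous of degree m and suppose (0,0,1) is a zero of f of multiplicity d ≥ 1; write f(t,x,y) = Σ_{j=d}^{m} y^{m−j}·h_j(t,x) where each h_j ∈ ℝ[t,x] is homogeneous of degree j and h_d ≠ 0. Then: (a) for c ∈ ℝ, r^{d+1} divides the binary form f(r·(−c,1,0) + s·(0,0,1)) ∈ ℝ[r,s] if and only if h_d(−c,1) = 0, which holds if and only if (t + cx) divides h_d in ℝ[t,x]; (b) if moreover λ : ℝ → ℝ is a function with f(−λ(x), x, 1) = 0 for all x ∈ ℝ,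 and lim_{x→0⁺} λ(x)/x = c or lim_{x→0⁻} λ(x)/x = c, then h_d(−c,1) = 0. -/
/-! Restricted to the line through `(-c,1,0)` and `(0,0,1)`, the decomposition gives
`f(r(-c,1,0) + s(0,0,1)) = Σ_j h_j(-c,1) r^j s^(m-j)`, whose `r^d`-coefficient is `h_d(-c,1)`.
A binary form of degree `n` vanishes at `(-c,1)` exactly when `t + cx` divides it: viewed as a
polynomial in `t` over `ℝ[x]`, it has the root `-cx`. For (b), homogeneity turns
`0 = f(-λ(x), x, 1)` into `0 = x^d Σ_j h_j(-λ(x)/x, 1) x^(j-d)`; cancelling `x^d` and letting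
`x → 0` from the given side leaves `h_d(-c,1) = 0`. -/

noncomputable section

open MvPolynomial in
/-- The binary form `f(r·q + s·p) ∈ ℝ[r,s]` obtained by restricting `f ∈ ℝ[t,x,y]`
to the line spanned by `q` and `p` (variable `X 0 = r`, `X 1 = s`). -/
def substLine (f : MvPolynomial (Fin 3) ℝ) (q p : Fin 3 → ℝ) : MvPolynomial (Fin 2) ℝ :=
  aeval (fun i => C (q i) * X 0 + C (p i) * X 1) f

open MvPolynomial Filter Topology Finset

namespace MvPolynomial

variable {σ R : Type*} [CommSemiring R]

theorem IsHomogeneous.aeval_algebraMap_mul {S : Type*} [CommSemiring S] [Algebra R S]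
    {φ : MvPolynomial σ R} {n : ℕ} (hφ : φ.IsHomogeneous n) (v : σ → R) (y : S) :
    MvPolynomial.aeval (fun i => algebraMap R S (v i) * y) φ =
      algebraMap R S (eval v φ) * y ^ n := by
  rw [aeval_def, eval₂_eq, eval_eq, map_sum, sum_mul]
  refine sum_congr rfl fun d hd => ?_
  have hdeg : ∑ i ∈ d.support, d i = n := by
    rw [← Finsupp.degree_apply, Finsupp.degree_eq_weight_one]
    exact hφ (mem_support_iff.mp hd)
  simp only [mul_pow, prod_mul_distrib, prod_pow_eq_pow_sum, hdeg, map_mul,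
    map_prod, map_pow, mul_assoc]

theorem IsHomogeneous.eval_mul_const {φ : MvPolynomial σ R} {n : ℕ} (hφ : φ.IsHomogeneous n)
    (v : σ → R) (t : R) : eval (fun i => v i * t) φ = eval v φ * t ^ n :=
  hφ.aeval_algebraMap_mul v t

theorem polynomial_eval_finSuccEquiv {n : ℕ} (q : MvPolynomial (Fin n) R)
    (f : MvPolynomial (Fin (n + 1)) R) :
    Polynomial.eval q (finSuccEquiv R n f) = aeval (Fin.cons q X) f := by
  rw [finSuccEquiv_apply, coe_eval₂Hom, ← Polynomial.coe_evalRingHom, eval₂_comp_left,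
    aeval_def]
  congr 1
  · ext; simp
  · funext i
    refine Fin.cases ?_ (fun k => ?_) i <;> simp

theorem IsHomogeneous.eval_eq_zero_iff_X_add_C_mul_X_dvd {R : Type*} [CommRing R]
    {φ : MvPolynomial (Fin 2) R} {n : ℕ} (hφ : φ.IsHomogeneous n) (c : R) :
    eval ![-c, 1] φ = 0 ↔ X 0 + C c * X 1 ∣ φ := by
  refine ⟨fun hroot => ?_, fun ⟨g, hg⟩ => by simp [hg]⟩
  have hlin :
      finSuccEquiv R 1 (X 0 + C c * X 1) = Polynomial.X - Polynomial.C (C (-c) * X 0) := by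
    rw [map_add, map_mul, finSuccEquiv_X_zero, show (1 : Fin 2) = Fin.succ 0 from rfl,
      finSuccEquiv_X_succ]
    simp [finSuccEquiv_apply, sub_eq_add_neg, mul_comm]
  have hcons : (Fin.cons (C (-c) * X 0) X : Fin 2 → MvPolynomial (Fin 1) R)
      = fun i => algebraMap R _ (![-c, 1] i) * X 0 := by
    funext i; fin_cases i <;> simp [algebraMap_eq]
  have hisroot : (finSuccEquiv R 1 φ).IsRoot (C (-c) * X 0) := by
    rw [Polynomial.IsRoot, polynomial_eval_finSuccEquiv, hcons, hφ.aeval_algebraMap_mul, hroot,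
      map_zero, zero_mul]
  rw [← map_dvd_iff (finSuccEquiv R 1), hlin]
  exact Polynomial.dvd_iff_isRoot.mpr hisroot

theorem X_zero_pow_succ_dvd_sum_iff {d m : ℕ} (hdm : d ≤ m) (e : ℕ → R) :
    (X 0 : MvPolynomial (Fin 2) R) ^ (d + 1) ∣
        ∑ j ∈ Icc d m, C (e j) * X 0 ^ j * X 1 ^ (m - j) ↔ e d = 0 := by
  constructor
  · intro hdvd
    have hX := map_dvd (aeval ![Polynomial.X, (1 : Polynomial R)]) hdvd
    simp only [map_pow, aeval_X, map_sum, map_mul, aeval_C, Matrix.cons_val_zero,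
      Matrix.cons_val_one, one_pow, mul_one, Polynomial.algebraMap_eq] at hX
    simpa [Polynomial.finsetSum_coeff, Polynomial.coeff_C_mul_X_pow, hdm] using
      Polynomial.X_pow_dvd_iff.mp hX d d.lt_succ_self
  · intro hd
    refine dvd_sum fun j hj => ?_
    obtain rfl | hne := eq_or_ne j d
    · simp [hd]
    · have hdj : d + 1 ≤ j := by grind
      exact ((pow_dvd_pow _ hdj).mul_left _).mul_right _

theorem eval_sum_X_two_pow_mul_rename (m : ℕ) (s : Finset ℕ)
    (h : ℕ → MvPolynomial (Fin 2) R) (a b : R) :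
    eval ![a, b, 1] (∑ j ∈ s, X 2 ^ (m - j) * rename Fin.castSucc (h j)) =
      ∑ j ∈ s, eval ![a, b] (h j) := by
  rw [map_sum]
  refine sum_congr rfl fun j _ => ?_
  have hcast : (![a, b, 1] ∘ Fin.castSucc : Fin 2 → R) = ![a, b] := by
    funext i; fin_cases i <;> rfl
  rw [eval_mul, eval_pow, eval_X, eval_rename, hcast]
  simp

theorem sum_eval_neg_mul_eq_pow_mul {R : Type*} [CommRing R] {d m : ℕ}
    (h : ℕ → MvPolynomial (Fin 2) R) (hhom : ∀ j ∈ Icc d m, (h j).IsHomogeneous j) (u x : R) :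
    ∑ j ∈ Icc d m, eval ![-(u * x), x] (h j) =
      x ^ d * ∑ j ∈ Icc d m, eval ![-u, 1] (h j) * x ^ (j - d) := by
  rw [mul_sum]
  refine sum_congr rfl fun j hj => ?_
  have hscale : (![-(u * x), x] : Fin 2 → R) = fun i => ![-u, 1] i * x := by
    funext i; fin_cases i <;> simp
  rw [hscale, (hhom j hj).eval_mul_const, mul_left_comm, ← pow_add,
    Nat.add_sub_cancel' (mem_Icc.mp hj).1]

end MvPolynomial

open MvPolynomial

theorem tendsto_sum_mul_pow_sub {R : Type*} [Semiring R] [TopologicalSpace R]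
    [IsTopologicalSemiring R] {d m : ℕ} (hdm : d ≤ m) {a : ℕ → R → R} {A : ℕ → R}
    {l : Filter R} (hl : l ≤ 𝓝 0) (ha : ∀ j ∈ Icc d m, Tendsto (a j) l (𝓝 (A j))) :
    Tendsto (fun x => ∑ j ∈ Icc d m, a j x * x ^ (j - d)) l (𝓝 (A d)) := by
  have hlim := tendsto_finsetSum (Icc d m) fun j hj =>
    (ha j hj).mul (((continuous_pow (j - d)).tendsto 0).mono_left hl)
  rwa [sum_eq_single_of_mem d (left_mem_Icc.mpr hdm) fun j hj hne => by
    rw [zero_pow (by grind), mul_zero], Nat.sub_self, pow_zero, mul_one] at hlim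

theorem substLine_sum_X_two_pow_mul_rename (m : ℕ) (s : Finset ℕ)
    (h : ℕ → MvPolynomial (Fin 2) ℝ) (hhom : ∀ j ∈ s, (h j).IsHomogeneous j) (a b : ℝ) :
    substLine (∑ j ∈ s, X 2 ^ (m - j) * rename Fin.castSucc (h j)) ![a, b, 0] ![0, 0, 1] =
      ∑ j ∈ s, C (eval ![a, b] (h j)) * X 0 ^ j * X 1 ^ (m - j) := by
  rw [substLine, map_sum]
  refine sum_congr rfl fun j hj => ?_
  have hline : ((fun i => C (![a, b, 0] i) * X 0 + C (![0, 0, 1] i) * X 1) ∘ Fin.castSucc :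
      Fin 2 → MvPolynomial (Fin 2) ℝ) = fun i => algebraMap ℝ _ (![a, b] i) * X 0 := by
    funext i; fin_cases i <;> simp [algebraMap_eq]
  rw [map_mul, map_pow, aeval_X, aeval_rename, hline, (hhom j hj).aeval_algebraMap_mul]
  simp only [Matrix.cons_val, C_0, zero_mul, C_1, one_mul, zero_add, algebraMap_eq]
  ring

theorem eval_eq_zero_of_tendsto_div {d m : ℕ} (hdm : d ≤ m) (h : ℕ → MvPolynomial (Fin 2) ℝ)
    (hhom : ∀ j ∈ Icc d m, (h j).IsHomogeneous j) {lam : ℝ → ℝ} {c : ℝ} {l : Filter ℝ}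
    [l.NeBot] (hl : l ≤ 𝓝[≠] 0)
    (hzero : ∀ x, ∑ j ∈ Icc d m, eval ![-(lam x), x] (h j) = 0)
    (htend : Tendsto (fun x => lam x / x) l (𝓝 c)) :
    eval ![-c, 1] (h d) = 0 := by
  set G := fun x => ∑ j ∈ Icc d m, eval ![-(lam x / x), 1] (h j) * x ^ (j - d)
  have hG : G =ᶠ[l] 0 := by
    filter_upwards [hl self_mem_nhdsWithin] with x (hx : x ≠ 0)
    have hfactor := sum_eval_neg_mul_eq_pow_mul h hhom (lam x / x) x
    rw [div_mul_cancel₀ _ hx, hzero] at hfactor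
    exact (mul_eq_zero.mp hfactor.symm).resolve_left (pow_ne_zero d hx)
  have hcont (p : MvPolynomial (Fin 2) ℝ) : Continuous fun u : ℝ => eval ![-u, 1] p :=
    (continuous_eval p).comp (by fun_prop)
  have hlim : Tendsto G l (𝓝 (eval ![-c, 1] (h d))) :=
    tendsto_sum_mul_pow_sub hdm (hl.trans nhdsWithin_le_nhds) fun j _ =>
      ((hcont (h j)).tendsto c).comp htend
  exact tendsto_nhds_unique hlim (tendsto_const_nhds.congr' hG.symm)

open MvPolynomial Filter in
theorem stmt15_general (m d : ℕ) (hdm : d ≤ m)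
    (f : MvPolynomial (Fin 3) ℝ)
    (h : ℕ → MvPolynomial (Fin 2) ℝ)
    (hhom : ∀ j ∈ Finset.Icc d m, (h j).IsHomogeneous j)
    (hdecomp : f = ∑ j ∈ Finset.Icc d m,
      (X 2 : MvPolynomial (Fin 3) ℝ) ^ (m - j) * rename Fin.castSucc (h j)) :
    (∀ c : ℝ,
      (((X 0 : MvPolynomial (Fin 2) ℝ) ^ (d + 1) ∣ substLine f ![-c, 1, 0] ![0, 0, 1]) ↔
        eval ![-c, 1] (h d) = 0) ∧
      (eval ![-c, 1] (h d) = 0 ↔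
        (X 0 + C c * X 1 : MvPolynomial (Fin 2) ℝ) ∣ h d)) ∧
    (∀ (lam : ℝ → ℝ) (c : ℝ),
      (∀ x : ℝ, eval ![-(lam x), x, 1] f = 0) →
      (Tendsto (fun x => lam x / x) (nhdsWithin 0 (Set.Ioi 0)) (nhds c) ∨
       Tendsto (fun x => lam x / x) (nhdsWithin 0 (Set.Iio 0)) (nhds c)) →
      eval ![-c, 1] (h d) = 0) := by
  refine ⟨fun c => ⟨?_, (hhom d (left_mem_Icc.mpr hdm)).eval_eq_zero_iff_X_add_C_mul_X_dvd c⟩,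
    fun lam c hlam htend => ?_⟩
  · rw [hdecomp, substLine_sum_X_two_pow_mul_rename m _ h hhom]
    exact X_zero_pow_succ_dvd_sum_iff hdm _
  · have hzero (x : ℝ) : ∑ j ∈ Icc d m, eval ![-(lam x), x] (h j) = 0 := by
      rw [← eval_sum_X_two_pow_mul_rename m, ← hdecomp, hlam]
    rcases htend with htend | htend <;>
      refine eval_eq_zero_of_tendsto_div hdm h hhom (nhdsWithin_mono _ fun x hx => ?_) hzero htend
    exacts [hx.ne', hx.ne]

open MvPolynomial Filter in
/-- Let `f ∈ ℝ[t,x,y]` be homogeneous of degree `m` with a zero of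
multiplicity `d ≥ 1` at `(0,0,1)`, and write `f = Σ_{j=d}^m y^{m−j} h_j(t,x)` with
`h_j` homogeneous of degree `j` and `h_d ≠ 0`. Then (a) `r^{d+1} ∣ f(r(−c,1,0)+s(0,0,1))`
iff `h_d(−c,1) = 0` iff `(t + cx) ∣ h_d`; and (b) if `λ : ℝ → ℝ` satisfies
`f(−λ(x), x, 1) = 0` for all `x` and `λ(x)/x → c` as `x → 0⁺` or `x → 0⁻`, then
`h_d(−c,1) = 0`. -/
theorem stmt15 (m d : ℕ) (hd1 : 1 ≤ d) (hdm : d ≤ m)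
    (f : MvPolynomial (Fin 3) ℝ) (hm : f.IsHomogeneous m)
    (hmult : ∀ q : Fin 3 → ℝ,
      (X 0 : MvPolynomial (Fin 2) ℝ) ^ d ∣ substLine f q ![0, 0, 1])
    (hmax : ∀ e : ℕ,
      (∀ q : Fin 3 → ℝ, (X 0 : MvPolynomial (Fin 2) ℝ) ^ e ∣ substLine f q ![0, 0, 1]) →
      e ≤ d)
    (h : ℕ → MvPolynomial (Fin 2) ℝ)
    (hhom : ∀ j ∈ Finset.Icc d m, (h j).IsHomogeneous j)
    (hhd : h d ≠ 0)
    (hdecomp : f = ∑ j ∈ Finset.Icc d m,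
      (X 2 : MvPolynomial (Fin 3) ℝ) ^ (m - j) * rename Fin.castSucc (h j)) :
    (∀ c : ℝ,
      (((X 0 : MvPolynomial (Fin 2) ℝ) ^ (d + 1) ∣ substLine f ![-c, 1, 0] ![0, 0, 1]) ↔
        eval ![-c, 1] (h d) = 0) ∧
      (eval ![-c, 1] (h d) = 0 ↔
        (X 0 + C c * X 1 : MvPolynomial (Fin 2) ℝ) ∣ h d)) ∧
    (∀ (lam : ℝ → ℝ) (c : ℝ),
      (∀ x : ℝ, eval ![-(lam x), x, 1] f = 0) →
      (Tendsto (fun x => lam x / x) (nhdsWithin 0 (Set.Ioi 0)) (nhds c) ∨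
       Tendsto (fun x => lam x / x) (nhdsWithin 0 (Set.Iio 0)) (nhds c)) →
      eval ![-c, 1] (h d) = 0) :=
  stmt15_general m d hdm f h hhom hdecomp

end
end

section
/- Let φ : ℝ → ℝ be a continuous function which is algebraic in the sense that there exists a nonzero polynomial F ∈ ℝ[y,z] with F(y, φ(y)) = 0 for all y ∈ ℝ. If inf{φ(y) : y ∈ ℝ} = 0, then either there exists y* ∈ ℝ with φ(y*) = 0, or φ(y) → 0 as y → +∞, or φ(y) → 0 as y → −∞. -/
open Filter MvPolynomial


lemma eval_aeval_poly (F : MvPolynomial (Fin 2) ℝ) (g : Fin 2 → Polynomial ℝ) (t : ℝ) :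
    Polynomial.eval t (MvPolynomial.aeval g F) =
      MvPolynomial.eval (fun i => Polynomial.eval t (g i)) F := by
  induction F using MvPolynomial.induction_on with
  | C a => simp
  | add p q hp hq => simp [hp, hq]
  | mul_X p i hp => simp [hp]

lemma inf_roots (F : MvPolynomial (Fin 2) ℝ) (c : ℝ)
    (h : {y : ℝ | MvPolynomial.eval ![y, c] F = 0}.Infinite) :
    ∀ y : ℝ, MvPolynomial.eval ![y, c] F = 0 := by
  set p : Polynomial ℝ := MvPolynomial.aeval ![Polynomial.X, Polynomial.C c] F with hp
  have key : ∀ y : ℝ, Polynomial.eval y p = MvPolynomial.eval ![y, c] F := by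
    intro y
    rw [hp, eval_aeval_poly]
    have : (fun i => Polynomial.eval y (![Polynomial.X, Polynomial.C c] i)) = ![y, c] := by
      funext i; fin_cases i <;> simp
    rw [this]
  have hp0 : p = 0 := by
    apply Polynomial.eq_zero_of_infinite_isRoot
    apply h.mono
    intro y hy
    simp only [Set.mem_setOf_eq, Polynomial.IsRoot] at *
    rw [key]; exact hy
  intro y
  rw [← key, hp0, Polynomial.eval_zero]

lemma contra_lemma (F : MvPolynomial (Fin 2) ℝ) (hF : F ≠ 0) (ε : ℝ) (hε : 0 < ε)
    (hlev : ∀ c ∈ Set.Ioo (0:ℝ) ε, {y : ℝ | MvPolynomial.eval ![y, c] F = 0}.Infinite) :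
    False := by
  have hvan : ∀ c ∈ Set.Ioo (0:ℝ) ε, ∀ y : ℝ, MvPolynomial.eval ![y, c] F = 0 :=
    fun c hc => inf_roots F c (hlev c hc)
  apply hF
  apply MvPolynomial.funext
  intro x
  have hx : x = ![x 0, x 1] := by funext i; fin_cases i <;> simp
  rw [map_zero, hx]
  set q : Polynomial ℝ := MvPolynomial.aeval ![Polynomial.C (x 0), Polynomial.X] F with hq
  have key : ∀ t : ℝ, Polynomial.eval t q = MvPolynomial.eval ![x 0, t] F := by
    intro t
    rw [hq, eval_aeval_poly]
    have : (fun i => Polynomial.eval t (![Polynomial.C (x 0), Polynomial.X] i)) = ![x 0, t] := by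
      funext i; fin_cases i <;> simp
    rw [this]
  have hq0 : q = 0 := by
    apply Polynomial.eq_zero_of_infinite_isRoot
    apply (Set.Ioo_infinite hε).mono
    intro c hc
    simp only [Set.mem_setOf_eq, Polynomial.IsRoot]
    rw [key]
    exact hvan c hc (x 0)
  rw [← key, hq0, Polynomial.eval_zero]

lemma level_infinite (ψ : ℝ → ℝ) (hc : Continuous ψ) (ε c : ℝ) (hcε : c < ε)
    (hbig : ∀ M : ℝ, ∃ y > M, ε ≤ ψ y)
    (hsmall : ∀ M : ℝ, ∃ y > M, ψ y < c) :
    {y : ℝ | ψ y = c}.Infinite := by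
  have unb : ∀ M : ℝ, ∃ y ∈ {y : ℝ | ψ y = c}, M < y := by
    intro M
    obtain ⟨a, haM, ha⟩ := hsmall M
    obtain ⟨b, hab, hb⟩ := hbig a
    have hmem : c ∈ Set.Icc (ψ a) (ψ b) := ⟨ha.le, hcε.le.trans hb⟩
    obtain ⟨y, hy, hyc⟩ := intermediate_value_Icc hab.le hc.continuousOn hmem
    exact ⟨y, hyc, lt_of_lt_of_le haM hy.1⟩
  intro hfin
  obtain ⟨B, hB⟩ := hfin.bddAbove
  obtain ⟨y, hy, hBy⟩ := unb B
  exact absurd (hB hy) (not_le.2 hBy)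

lemma small_abs (φ : ℝ → ℝ) (hcont : Continuous φ) (hpos : ∀ y, 0 < φ y)
    (hinf : IsGLB (Set.range φ) 0) :
    ∀ δ > (0:ℝ), ∀ M : ℝ, ∃ y : ℝ, M < |y| ∧ φ y < δ := by
  intro δ hδ M
  obtain ⟨x0, hx0, hmin⟩ := isCompact_Icc.exists_isMinOn
    (Set.nonempty_Icc.2 (neg_le_self (abs_nonneg M))) hcont.continuousOn
  set δ' := min δ (φ x0) with hδ'
  have hδ'pos : 0 < δ' := lt_min hδ (hpos x0)
  have : ∃ y : ℝ, φ y < δ' := by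
    by_contra hcon
    push_neg at hcon
    have : δ' ∈ lowerBounds (Set.range φ) := by
      rintro _ ⟨y, rfl⟩; exact hcon y
    exact absurd (hinf.2 this) (not_le.2 hδ'pos)
  obtain ⟨y, hy⟩ := this
  refine ⟨y, ?_, lt_of_lt_of_le hy (min_le_left _ _)⟩
  have hMabs : |M| < |y| := by
    by_contra hle
    push_neg at hle
    have hyIcc : y ∈ Set.Icc (-|M|) (|M|) := abs_le.1 hle
    exact absurd (lt_of_lt_of_le hy (min_le_right _ _)) (not_lt.2 (hmin hyIcc))
  exact lt_of_le_of_lt (le_abs_self M) hMabs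


/-- A continuous algebraic function `φ : ℝ → ℝ` whose infimum is `0`
either attains the value `0`, or tends to `0` at `+∞` or at `−∞`. -/
theorem stmt16 (φ : ℝ → ℝ) (hcont : Continuous φ)
    (F : MvPolynomial (Fin 2) ℝ) (hF : F ≠ 0)
    (halg : ∀ y : ℝ, eval ![y, φ y] F = 0)
    (hinf : IsGLB (Set.range φ) 0) :
    (∃ y : ℝ, φ y = 0) ∨
    Tendsto φ atTop (nhds 0) ∨
    Tendsto φ atBot (nhds 0) := by
  by_contra h
  push_neg at h
  obtain ⟨hno, hnt, hnb⟩ := h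
  have hpos : ∀ y, 0 < φ y := fun y =>
    lt_of_le_of_ne (hinf.1 (Set.mem_range_self y)) (Ne.symm (hno y))
  have hsa := small_abs φ hcont hpos hinf
  -- a level set {y | φ y = c} infinite for all c in (0, ε) gives contradiction
  have finish : ∀ ε : ℝ, 0 < ε →
      (∀ c ∈ Set.Ioo (0:ℝ) ε, {y : ℝ | φ y = c}.Infinite) → False := by
    intro ε hε hlev
    refine contra_lemma F hF ε hε (fun c hc => (hlev c hc).mono ?_)
    intro y hy
    simp only [Set.mem_setOf_eq] at *
    rw [← hy]
    exact halg y
  by_cases hside : ∀ δ > (0:ℝ), ∀ M : ℝ, ∃ y > M, φ y < δ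
  · -- small values frequent at +∞
    rw [Metric.tendsto_atTop] at hnt
    push_neg at hnt
    obtain ⟨ε, hε, hbig0⟩ := hnt
    have hbig : ∀ M : ℝ, ∃ y > M, ε ≤ φ y := by
      intro M
      obtain ⟨n, hn, hd⟩ := hbig0 (M + 1)
      refine ⟨n, by linarith, ?_⟩
      rwa [Real.dist_eq, sub_zero, abs_of_pos (hpos n)] at hd
    refine finish ε hε (fun c hc => ?_)
    exact level_infinite φ hcont ε c hc.2 hbig (hside c hc.1)
  · -- small values frequent at −∞
    push_neg at hside
    obtain ⟨δ₀, hδ₀, M₀, hM₀⟩ := hside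
    have hsmallbot : ∀ δ > (0:ℝ), ∀ M : ℝ, ∃ y < M, φ y < δ := by
      intro δ hδ M
      obtain ⟨y, hy1, hy2⟩ := hsa (min δ δ₀) (lt_min hδ hδ₀) (max |M₀| |M|)
      have hyδ : φ y < δ := lt_of_lt_of_le hy2 (min_le_left _ _)
      have hyδ₀ : φ y < δ₀ := lt_of_lt_of_le hy2 (min_le_right _ _)
      have hyM₀ : y ≤ M₀ := by
        by_contra hgt
        push_neg at hgt
        exact absurd (hM₀ y hgt) (not_le.2 hyδ₀)
      have habs : |M₀| < |y| := lt_of_le_of_lt (le_max_left _ _) hy1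
      have hyneg : y < 0 := by
        by_contra hge
        push_neg at hge
        rw [abs_of_nonneg hge] at habs
        exact absurd (hyM₀.trans (le_abs_self M₀)) (not_le.2 habs)
      have : y < -|M| := by
        have : |M| < -y := by
          rw [abs_of_neg hyneg] at hy1
          exact lt_of_le_of_lt (le_max_right _ _) hy1
        linarith
      exact ⟨y, lt_of_lt_of_le this (neg_abs_le M), hyδ⟩
    set ψ : ℝ → ℝ := fun y => φ (-y) with hψ
    have hψcont : Continuous ψ := hcont.comp continuous_neg
    have hnψ : ¬ Tendsto ψ atTop (nhds 0) := by
      intro hT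
      apply hnb
      have h2 := hT.comp tendsto_neg_atBot_atTop
      have h3 : ψ ∘ Neg.neg = φ := by funext y; simp [hψ]
      rwa [h3] at h2
    rw [Metric.tendsto_atTop] at hnψ
    push_neg at hnψ
    obtain ⟨ε, hε, hbig0⟩ := hnψ
    have hbig : ∀ M : ℝ, ∃ y > M, ε ≤ ψ y := by
      intro M
      obtain ⟨n, hn, hd⟩ := hbig0 (M + 1)
      refine ⟨n, by linarith, ?_⟩
      rwa [Real.dist_eq, sub_zero, abs_of_pos (hpos (-n))] at hd
    have hsmall : ∀ c > (0:ℝ), ∀ M : ℝ, ∃ y > M, ψ y < c := by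
      intro c hcpos M
      obtain ⟨y, hy1, hy2⟩ := hsmallbot c hcpos (-M)
      exact ⟨-y, by linarith, by simpa [hψ] using hy2⟩
    refine finish ε hε (fun c hc => ?_)
    have hinfψ : {y : ℝ | ψ y = c}.Infinite :=
      level_infinite ψ hψcont ε c hc.2 hbig (hsmall c hc.1)
    have himg : (Neg.neg '' {y : ℝ | ψ y = c}) ⊆ {y : ℝ | φ y = c} := by
      rintro _ ⟨y, hy, rfl⟩
      simpa [hψ] using hy
    exact (hinfψ.image (fun a _ b _ h => neg_injective h)).mono himg
end

section
/- Let R be a unique factorization domain, let M be an n×n matrix with entries in R, let ℓ ∈ R be irreducible, and let 1 ≤ d ≤ n. If ℓ divides every d×d minor of M (i.e., the determinant of every d×d submatrix obtained by choosing d rows and d columns of M), then ℓ^{n−d+1} divides det(M). -/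
/-!
Write `n = d + j` and induct on `j`. For `N` of size `m + 1 > d`, every entry of `adj N` is, up
to sign, an `m × m` minor, so if `ℓ ^ e` divides all of these (with `e ≥ 1`), then
`ℓ ^ (e (m + 1))` divides `det (adj N) = (det N) ^ m`. Since `ℓ` is prime, comparing
`ℓ`-adic valuations gives `m v ≥ e m + e ≥ e m + 1`, where `v` is the valuation of `det N`,
hence `v ≥ e + 1`.
-/

open Matrix

theorem Matrix.pow_card_dvd_det_of_forall_dvd {R ι : Type*} [CommRing R] [Fintype ι]
    [DecidableEq ι] {a : R} {A : Matrix ι ι R} (h : ∀ i j, a ∣ A i j) :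
    a ^ Fintype.card ι ∣ A.det := by
  choose B hB using h
  have hA : A = a • Matrix.of B := by
    ext i j
    exact hB i j
  rw [hA, det_smul]
  exact dvd_mul_right _ _

theorem Prime.pow_succ_dvd_of_pow_mul_add_one_dvd_pow {α : Type*}
    [CommMonoidWithZero α] [IsCancelMulZero α] {p x : α} (hp : Prime p) {m e : ℕ}
    (h : p ^ (m * e + 1) ∣ x ^ m) : p ^ (e + 1) ∣ x := by
  rw [pow_dvd_iff_le_emultiplicity, emultiplicity_pow hp] at h
  rw [pow_dvd_iff_le_emultiplicity]
  cases hv : emultiplicity p x with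
  | top => exact le_top
  | coe v =>
    rw [hv] at h
    norm_cast at h ⊢
    by_contra! hlt
    have : m * v ≤ m * e := Nat.mul_le_mul_left m (by omega)
    omega

theorem Matrix.pow_succ_dvd_det_of_pow_dvd_det_submatrix_succAbove {R : Type*} [CommRing R]
    [IsDomain R] {p : R} (hp : Prime p) {m e : ℕ} (he : e ≠ 0)
    (N : Matrix (Fin (m + 1)) (Fin (m + 1)) R)
    (h : ∀ i j : Fin (m + 1), p ^ e ∣ (N.submatrix i.succAbove j.succAbove).det) :
    p ^ (e + 1) ∣ N.det := by
  have hadj : ∀ i j, p ^ e ∣ N.adjugate i j := fun i j => by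
    rw [adjugate_fin_succ_eq_det_submatrix]
    exact (h j i).mul_left _
  have hdet : p ^ (e * (m + 1)) ∣ N.det ^ m := by
    simpa [pow_mul, det_adjugate] using pow_card_dvd_det_of_forall_dvd hadj
  refine hp.pow_succ_dvd_of_pow_mul_add_one_dvd_pow (dvd_trans (pow_dvd_pow p ?_) hdet)
  rw [Nat.mul_succ, Nat.mul_comm]
  omega

theorem Matrix.pow_succ_dvd_det_of_dvd_det_submatrix {R : Type*} [CommRing R] [IsDomain R]
    {p : R} (hp : Prime p) {d : ℕ} :
    ∀ (j : ℕ) (N : Matrix (Fin (d + j)) (Fin (d + j)) R),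
      (∀ r c : Fin d → Fin (d + j), Function.Injective r → Function.Injective c →
        p ∣ (N.submatrix r c).det) →
      p ^ (j + 1) ∣ N.det
  | 0, N, h => by simpa using h id id Function.injective_id Function.injective_id
  | j + 1, N, h => by
    refine pow_succ_dvd_det_of_pow_dvd_det_submatrix_succAbove hp (by omega) N
      fun i k => pow_succ_dvd_det_of_dvd_det_submatrix hp j _ fun r c hr hc => ?_
    exact h _ _ (Fin.succAbove_right_injective.comp hr) (Fin.succAbove_right_injective.comp hc)

theorem stmt18_general {R : Type*} [CommRing R] [IsDomain R] [UniqueFactorizationMonoid R]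
    {n d : ℕ} (hdn : d ≤ n)
    (M : Matrix (Fin n) (Fin n) R) (l : R) (hl : Irreducible l)
    (hminor : ∀ r c : Fin d → Fin n, Function.Injective r → Function.Injective c →
      l ∣ (M.submatrix r c).det) :
    l ^ (n - d + 1) ∣ M.det := by
  obtain ⟨j, rfl⟩ := Nat.exists_eq_add_of_le hdn
  rw [Nat.add_sub_cancel_left]
  exact pow_succ_dvd_det_of_dvd_det_submatrix hl.prime j M hminor

/-- Over a UFD, if an irreducible `ℓ` divides every `d × d` minor of
an `n × n` matrix `M` (with `1 ≤ d ≤ n`), then `ℓ^{n−d+1}` divides `det M`. -/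
theorem stmt18 {R : Type*} [CommRing R] [IsDomain R] [UniqueFactorizationMonoid R]
    {n d : ℕ} (hd1 : 1 ≤ d) (hdn : d ≤ n)
    (M : Matrix (Fin n) (Fin n) R) (l : R) (hl : Irreducible l)
    (hminor : ∀ r c : Fin d → Fin n, Function.Injective r → Function.Injective c →
      l ∣ (M.submatrix r c).det) :
    l ^ (n - d + 1) ∣ M.det :=
  stmt18_general hdn M l hl hminor
end
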